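/- arXiv:2405.16359 — 3 statements merged into one kernel-verified Lean document; each statement's English description precedes it below -/
import Mathlib

section
/- Let f = f̃/Z be a normalized target with unnormalized density f̃, g a normalized proposal, and w̃ = f̃/g. For any test function h with sup|h| ≤ 1, the autonormalized importance sampling estimator I^AIS = (Σ w̃(Xⁿ) h(Xⁿ))/(Σ w̃(Xⁿ)), with X⁽ⁿ⁾ i.i.d. ~ g, satisfies |E[I^AIS − I_f[h]]| ≤ (2/N)·E_g[w̃²]/(E_g[w̃])² and E[(I^AIS − I_f[h])²] ≤ (4/N)·E_g[w̃²]/(E_g[w̃])². -/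
open MeasureTheory ProbabilityTheory

/-! Put `V = ∑ₙ w̃(Xⁿ)` and `U = ∑ₙ w̃(Xⁿ) h(Xⁿ)`, so that `I^AIS = U / V` satisfies `|I^AIS| ≤ 1`
and `I^AIS · V = U`. Under `g`, `E[V] = N Z`, `E[U] = N Z I_f[h]`, and both variances are at
most `N E_g[w̃²]` because `|h| ≤ 1`. The identity
`N Z (I^AIS - I_f[h]) = (U - N Z I_f[h]) - I^AIS (V - N Z)` bounds the mean squared error by
`2 (Var U + Var V) / (N Z)²`. For the bias, `E[I^AIS · V] = E[U]` gives
`N Z (E[I^AIS] - I_f[h]) = -cov(I^AIS, V)`, and Cauchy–Schwarz bounds this covariance by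
`√(Var I^AIS · Var V)`, where `Var I^AIS` is at most the mean squared error. -/

lemma div_mul_cancel_of_abs_le {x y : ℝ} (h : |x| ≤ y) : x / y * y = x := by
  rcases (abs_nonneg x |>.trans h).eq_or_lt with hy | hy
  · rw [← hy] at h ⊢
    simp [abs_nonpos_iff.mp h]
  · exact div_mul_cancel₀ x hy.ne'

lemma abs_div_le_one_of_abs_le {x y : ℝ} (h : |x| ≤ y) : |x / y| ≤ 1 := by
  rw [abs_div, abs_of_nonneg (abs_nonneg x |>.trans h)]
  exact div_le_one_of_le₀ h (abs_nonneg x |>.trans h)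

lemma Finset.abs_sum_mul_le_sum {ι : Type*} (s : Finset ι) {a b : ι → ℝ} (ha : ∀ i, 0 ≤ a i)
    (hb : ∀ i, |b i| ≤ 1) : |∑ i ∈ s, a i * b i| ≤ ∑ i ∈ s, a i :=
  (Finset.abs_sum_le_sum_abs _ _).trans <| Finset.sum_le_sum fun i _ => by
    rw [abs_mul, abs_of_nonneg (ha i)]
    exact mul_le_of_le_one_right (ha i) (hb i)

section Ratio

variable {Ω : Type*} [MeasurableSpace Ω] {P : Measure Ω}

lemma ProbabilityTheory.sq_covariance_le_variance_mul [IsFiniteMeasure P] {X Y : Ω → ℝ}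
    (hX : MemLp X 2 P) (hY : MemLp Y 2 P) :
    cov[X, Y; P] ^ 2 ≤ Var[X; P] * Var[Y; P] := by
  have hquad : ∀ t : ℝ, 0 ≤ Var[X; P] * (t * t) + 2 * cov[X, Y; P] * t + Var[Y; P] := by
    intro t
    have := variance_add (hX.const_smul t) hY
    rw [variance_smul, covariance_smul_left] at this
    linarith [variance_nonneg (t • X + Y) P]
  have := discrim_le_zero hquad
  rw [discrim] at this
  linarith

variable [IsProbabilityMeasure P] {U V R : Ω → ℝ} {m c : ℝ}

lemma sq_mul_integral_sq_sub_le_of_mul_eq (hU : MemLp U 2 P) (hV : MemLp V 2 P)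
    (hR : AEStronglyMeasurable R P) (hR1 : ∀ ω, |R ω| ≤ 1) (hRV : ∀ ω, R ω * V ω = U ω)
    (hVm : P[V] = m) (hUm : P[U] = m * c) :
    m ^ 2 * ∫ ω, (R ω - c) ^ 2 ∂P ≤ 2 * Var[U; P] + 2 * Var[V; P] := by
  have hRc : MemLp (fun ω => R ω - c) 2 P :=
    (MemLp.of_bound hR 1 (.of_forall fun ω => by simpa using hR1 ω)).sub (memLp_const c)
  have hUc : MemLp (fun ω => U ω - m * c) 2 P := hU.sub (memLp_const _)
  have hVc : MemLp (fun ω => V ω - m) 2 P := hV.sub (memLp_const _)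
  have hpt : ∀ ω, m ^ 2 * (R ω - c) ^ 2 ≤ 2 * (U ω - m * c) ^ 2 + 2 * (V ω - m) ^ 2 := by
    intro ω
    have hR2 : R ω ^ 2 ≤ 1 := by nlinarith [abs_nonneg (R ω), sq_abs (R ω), hR1 ω]
    have hid : m * (R ω - c) = (U ω - m * c) - R ω * (V ω - m) := by
      linear_combination hRV ω
    calc m ^ 2 * (R ω - c) ^ 2 = ((U ω - m * c) - R ω * (V ω - m)) ^ 2 := by
          rw [← hid]; ring
      _ ≤ 2 * (U ω - m * c) ^ 2 + 2 * (R ω ^ 2 * (V ω - m) ^ 2) := by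
          nlinarith [sq_nonneg ((U ω - m * c) + R ω * (V ω - m))]
      _ ≤ 2 * (U ω - m * c) ^ 2 + 2 * (V ω - m) ^ 2 := by
          nlinarith [sq_nonneg (V ω - m)]
  rw [variance_eq_integral hU.aemeasurable, variance_eq_integral hV.aemeasurable, hUm, hVm,
    ← integral_const_mul, ← integral_const_mul, ← integral_const_mul,
    ← integral_add (hUc.integrable_sq.const_mul 2) (hVc.integrable_sq.const_mul 2)]
  exact integral_mono (hRc.integrable_sq.const_mul _)
    ((hUc.integrable_sq.const_mul 2).add (hVc.integrable_sq.const_mul 2)) hpt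

lemma mul_integral_sub_eq_neg_covariance_of_mul_eq (hV : MemLp V 2 P)
    (hR : MemLp R 2 P) (hRV : ∀ ω, R ω * V ω = U ω) (hVm : P[V] = m) (hUm : P[U] = m * c) :
    m * (P[R] - c) = -cov[R, V; P] := by
  have hRV' : R * V = U := funext hRV
  rw [covariance_eq_sub hR hV, hRV', hUm, hVm]
  ring

lemma abs_integral_sub_le_and_integral_sq_sub_le_of_mul_eq (hU : MemLp U 2 P)
    (hV : MemLp V 2 P) (hR : AEStronglyMeasurable R P) (hR1 : ∀ ω, |R ω| ≤ 1)
    (hRV : ∀ ω, R ω * V ω = U ω) (hVm : P[V] = m) (hUm : P[U] = m * c) (hm : 0 < m) {σ2 : ℝ}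
    (hUσ : Var[U; P] ≤ σ2) (hVσ : Var[V; P] ≤ σ2) :
    |∫ ω, (R ω - c) ∂P| ≤ 2 * σ2 / m ^ 2 ∧ ∫ ω, (R ω - c) ^ 2 ∂P ≤ 4 * σ2 / m ^ 2 := by
  have hRL : MemLp R 2 P := MemLp.of_bound hR 1 (.of_forall fun ω => by simpa using hR1 ω)
  have hσ : 0 ≤ σ2 := (variance_nonneg V P).trans hVσ
  have hmse : ∫ ω, (R ω - c) ^ 2 ∂P ≤ 4 * σ2 / m ^ 2 := by
    rw [le_div_iff₀ (by positivity), mul_comm]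
    linarith [sq_mul_integral_sq_sub_le_of_mul_eq hU hV hR hR1 hRV hVm hUm]
  refine ⟨?_, hmse⟩
  have hvarR : Var[R; P] ≤ ∫ ω, (R ω - c) ^ 2 ∂P := by
    rw [← variance_sub_const hR c]
    exact variance_le_expectation_sq (hR.sub aestronglyMeasurable_const)
  have hcov : cov[R, V; P] ^ 2 ≤ (2 * σ2 / m) ^ 2 :=
    calc cov[R, V; P] ^ 2 ≤ Var[R; P] * Var[V; P] := sq_covariance_le_variance_mul hRL hV
      _ ≤ 4 * σ2 / m ^ 2 * σ2 :=
          mul_le_mul (hvarR.trans hmse) hVσ (variance_nonneg V P) (by positivity)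
      _ = (2 * σ2 / m) ^ 2 := by field_simp; ring
  have hcov_abs : |cov[R, V; P]| ≤ 2 * σ2 / m := abs_le_of_sq_le_sq hcov (by positivity)
  have hbias : |P[R] - c| * m = |cov[R, V; P]| := by
    rw [← abs_neg (cov[R, V; P]),
      ← mul_integral_sub_eq_neg_covariance_of_mul_eq hV hRL hRV hVm hUm, abs_mul, abs_of_pos hm,
      mul_comm]
  rw [integral_sub (hRL.integrable one_le_two) (integrable_const c), integral_const,
    probReal_univ, one_smul, le_div_iff₀ (by positivity)]
  calc |P[R] - c| * m ^ 2 = |cov[R, V; P]| * m := by rw [← hbias]; ring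
    _ ≤ 2 * σ2 / m * m := by gcongr
    _ = 2 * σ2 := by field_simp

end Ratio

section IID

variable {ι Ω E : Type*} [Fintype ι] [MeasurableSpace Ω] [MeasurableSpace E]
  {P : Measure Ω} {ν : Measure E} {X : ι → Ω → E} {F : E → ℝ}

lemma integral_sum_comp_of_measurePreserving (hX : ∀ i, MeasurePreserving (X i) P ν)
    (hF : Integrable F ν) :
    ∫ ω, ∑ i, F (X i ω) ∂P = Fintype.card ι * ∫ x, F x ∂ν := by
  have hcomp (i : ι) : ∫ ω, F (X i ω) ∂P = ∫ x, F x ∂ν := by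
    rw [← (hX i).map_eq] at hF ⊢
    exact (integral_map (hX i).aemeasurable hF.aestronglyMeasurable).symm
  rw [integral_finsetSum (f := fun i ω => F (X i ω)) _ fun i _ =>
    ((hX i).integrable_comp hF.aestronglyMeasurable).mpr hF]
  simp [hcomp]

lemma variance_sum_comp_of_iIndepFun [IsFiniteMeasure P] (hind : iIndepFun X P)
    (hX : ∀ i, MeasurePreserving (X i) P ν) (hFm : Measurable F) (hF : MemLp F 2 ν) :
    Var[fun ω => ∑ i, F (X i ω); P] = Fintype.card ι * Var[F; ν] := by
  have hsum := IndepFun.variance_sum (s := Finset.univ) (X := fun i => F ∘ X i)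
    (fun i _ => hF.comp_measurePreserving (hX i))
    (fun i _ j _ hij => (hind.comp (fun _ => F) fun _ => hFm).indepFun hij)
  have hcomp (i : ι) : Var[F ∘ X i; P] = Var[F; ν] :=
    (hX i).variance_fun_comp hFm.aemeasurable
  simp only [hcomp, Finset.sum_const, Finset.card_univ, nsmul_eq_mul] at hsum
  rw [← hsum]
  congr 1
  ext ω
  simp

lemma memLp_sum_comp_of_measurePreserving (hX : ∀ i, MeasurePreserving (X i) P ν)
    (hF : MemLp F 2 ν) : MemLp (fun ω => ∑ i, F (X i ω)) 2 P :=
  memLp_finsetSum (f := fun i ω => F (X i ω)) Finset.univ fun i _ =>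
    hF.comp_measurePreserving (hX i)

end IID

section Density

variable {E : Type*} [MeasurableSpace E] {μ : Measure E} {g : E → ℝ}

lemma isProbabilityMeasure_withDensity_ofReal (hg0 : 0 ≤ᵐ[μ] g) (hg1 : ∫ x, g x ∂μ = 1) :
    IsProbabilityMeasure (μ.withDensity fun x => ENNReal.ofReal (g x)) := by
  have hg : Integrable g μ := Integrable.of_integral_ne_zero (by rw [hg1]; exact one_ne_zero)
  constructor
  rw [withDensity_apply _ MeasurableSet.univ, Measure.restrict_univ,
    ← ofReal_integral_eq_lintegral_ofReal hg hg0, hg1, ENNReal.ofReal_one]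

lemma integral_withDensity_ofReal (hg : Measurable g) (hg0 : 0 ≤ᵐ[μ] g) (F : E → ℝ) :
    ∫ x, F x ∂μ.withDensity (fun x => ENNReal.ofReal (g x)) = ∫ x, g x * F x ∂μ := by
  rw [integral_withDensity_eq_integral_toReal_smul hg.ennreal_ofReal
    (.of_forall fun _ => ENNReal.ofReal_lt_top)]
  refine integral_congr_ae ?_
  filter_upwards [hg0] with x hx
  rw [ENNReal.toReal_ofReal hx, smul_eq_mul]

end Density

theorem selfNormalized_error_le {ι Ω E : Type*} [Fintype ι] [Nonempty ι] [MeasurableSpace Ω]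
    [MeasurableSpace E] {P : Measure Ω} [IsProbabilityMeasure P] {ν : Measure E}
    [IsProbabilityMeasure ν] {X : ι → Ω → E} (hind : iIndepFun X P)
    (hX : ∀ i, MeasurePreserving (X i) P ν) {w h : E → ℝ} (hwm : Measurable w)
    (hw0 : ∀ x, 0 ≤ w x) (hw2 : MemLp w 2 ν) (hw : 0 < ∫ x, w x ∂ν) (hhm : Measurable h)
    (hh1 : ∀ x, |h x| ≤ 1) {c : ℝ} (hc : ∫ x, w x * h x ∂ν = (∫ x, w x ∂ν) * c) :
    |∫ ω, ((∑ i, w (X i ω) * h (X i ω)) / (∑ i, w (X i ω)) - c) ∂P|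
        ≤ (2 / Fintype.card ι) * (∫ x, w x ^ 2 ∂ν) / (∫ x, w x ∂ν) ^ 2 ∧
      ∫ ω, ((∑ i, w (X i ω) * h (X i ω)) / (∑ i, w (X i ω)) - c) ^ 2 ∂P
        ≤ (4 / Fintype.card ι) * (∫ x, w x ^ 2 ∂ν) / (∫ x, w x ∂ν) ^ 2 := by
  have hn : (0 : ℝ) < Fintype.card ι := Nat.cast_pos.mpr Fintype.card_pos
  have hwhm : Measurable fun x => w x * h x := hwm.mul hhm
  have hwh_le (x : E) : |w x * h x| ≤ |w x| := by
    rw [abs_mul]; exact mul_le_of_le_one_right (abs_nonneg _) (hh1 x)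
  have hwh2 : MemLp (fun x => w x * h x) 2 ν :=
    hw2.of_le hwhm.aestronglyMeasurable (.of_forall fun x => by simpa using hwh_le x)
  have hvar_w : Var[w; ν] ≤ ∫ x, w x ^ 2 ∂ν :=
    variance_le_expectation_sq hwm.aestronglyMeasurable
  have hvar_wh : Var[fun x => w x * h x; ν] ≤ ∫ x, w x ^ 2 ∂ν :=
    (variance_le_expectation_sq hwhm.aestronglyMeasurable).trans <|
      integral_mono hwh2.integrable_sq hw2.integrable_sq fun x => by
        simpa only [Pi.pow_apply, sq_abs] using pow_le_pow_left₀ (abs_nonneg _) (hwh_le x) 2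
  have hUV (ω : Ω) : |∑ i, w (X i ω) * h (X i ω)| ≤ ∑ i, w (X i ω) :=
    Finset.abs_sum_mul_le_sum _ (fun i => hw0 _) fun i => hh1 _
  obtain ⟨hbias, hmse⟩ := abs_integral_sub_le_and_integral_sq_sub_le_of_mul_eq
    (R := fun ω => (∑ i, w (X i ω) * h (X i ω)) / (∑ i, w (X i ω)))
    (memLp_sum_comp_of_measurePreserving hX hwh2) (memLp_sum_comp_of_measurePreserving hX hw2)
    ((Finset.measurable_sum _ fun i _ => hwhm.comp (hX i).measurable).div
      (Finset.measurable_sum _ fun i _ => hwm.comp (hX i).measurable)).aestronglyMeasurable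
    (fun ω => abs_div_le_one_of_abs_le (hUV ω)) (fun ω => div_mul_cancel_of_abs_le (hUV ω))
    (integral_sum_comp_of_measurePreserving hX (hw2.integrable one_le_two))
    (by rw [integral_sum_comp_of_measurePreserving hX (hwh2.integrable one_le_two), hc,
      mul_assoc])
    (mul_pos hn hw) (σ2 := Fintype.card ι * ∫ x, w x ^ 2 ∂ν)
    (by rw [variance_sum_comp_of_iIndepFun hind hX hwhm hwh2]; gcongr)
    (by rw [variance_sum_comp_of_iIndepFun hind hX hwm hw2]; gcongr)
  constructor
  · convert hbias using 1; field_simp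
  · convert hmse using 1; field_simp

theorem autonormalized_importance_sampling_error_general
    {E : Type*} [MeasurableSpace E] (μ : Measure E)
    (f g ftilde : E → ℝ) (hf : Measurable f) (hg : Measurable g)
    (hf0 : ∀ x, 0 ≤ f x) (hg0 : ∀ x, 0 ≤ g x)
    (hf1 : ∫ x, f x ∂μ = 1) (hg1 : ∫ x, g x ∂μ = 1)
    (Z : ℝ) (hZ : 0 < Z) (hft : ∀ x, ftilde x = Z * f x)
    (hsupp : ∀ x, g x = 0 → f x = 0)
    (wt : E → ℝ) (hwt : ∀ x, wt x = ftilde x / g x)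
    (ν : Measure E) (hν : ν = μ.withDensity fun x => ENNReal.ofReal (g x))
    (hwt2 : MemLp wt 2 ν)
    (h : E → ℝ) (hh : Measurable h) (hhb : ∀ x, |h x| ≤ 1)
    {Ω : Type*} [MeasurableSpace Ω] (P : Measure Ω) [IsProbabilityMeasure P]
    (N : ℕ) (hN : 0 < N)
    (X : Fin N → Ω → E) (hX : ∀ n, Measurable (X n))
    (hiid : iIndepFun X P)
    (hlaw : ∀ n, Measure.map (X n) P = ν)
    (AIS : Ω → ℝ)
    (hAIS : ∀ ω, AIS ω = (∑ n, wt (X n ω) * h (X n ω)) / ∑ n, wt (X n ω)) :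
    |∫ ω, (AIS ω - ∫ x, h x * f x ∂μ) ∂P|
        ≤ (2 / N) * (∫ x, wt x ^ 2 ∂ν) / (∫ x, wt x ∂ν) ^ 2 ∧
      (∫ ω, (AIS ω - ∫ x, h x * f x ∂μ) ^ 2 ∂P)
        ≤ (4 / N) * (∫ x, wt x ^ 2 ∂ν) / (∫ x, wt x ∂ν) ^ 2 := by
  have hgwt (x : E) : g x * wt x = Z * f x := by
    rcases eq_or_ne (g x) 0 with hgx | hgx
    · simp [hgx, hsupp x hgx]
    · rw [hwt, hft]; field_simp
  have hwtm : Measurable wt := by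
    simp_rw [funext hwt, hft]; exact (measurable_const.mul hf).div hg
  have hwt0 (x : E) : 0 ≤ wt x := by
    rw [hwt, hft]; exact div_nonneg (mul_nonneg hZ.le (hf0 x)) (hg0 x)
  have hν_int (F : E → ℝ) : ∫ x, F x ∂ν = ∫ x, g x * F x ∂μ :=
    hν ▸ integral_withDensity_ofReal hg (.of_forall hg0) F
  have hmean : ∫ x, wt x ∂ν = Z := by
    rw [hν_int]; simp_rw [hgwt]; rw [integral_const_mul, hf1, mul_one]
  have hmean_h : ∫ x, wt x * h x ∂ν = (∫ x, wt x ∂ν) * ∫ x, h x * f x ∂μ := by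
    rw [hν_int, hmean, ← integral_const_mul]
    congr 1 with x
    rw [← mul_assoc, hgwt]; ring
  have : IsProbabilityMeasure ν :=
    hν ▸ isProbabilityMeasure_withDensity_ofReal (.of_forall hg0) hg1
  have : Nonempty (Fin N) := Fin.pos_iff_nonempty.mp hN
  simp_rw [hAIS]
  simpa using selfNormalized_error_le hiid (fun n => ⟨hX n, hlaw n⟩) hwtm hwt0 hwt2
    (hmean ▸ hZ) hh hhb hmean_h

/-- **Autonormalized importance sampling error.** With target `f = f̃/Z` (unnormalized
`f̃`, `Z > 0`), normalized proposal `g`, weights `w̃ = f̃/g`, i.i.d. draws `X⁽ⁿ⁾ ~ g`, and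
any test function `h` bounded by 1, the autonormalized estimator
`I^AIS = (∑ w̃(Xⁿ)h(Xⁿ)) / (∑ w̃(Xⁿ))` satisfies
`|E[I^AIS − I_f[h]]| ≤ (2/N)·E_g[w̃²]/(E_g[w̃])²` and
`E[(I^AIS − I_f[h])²] ≤ (4/N)·E_g[w̃²]/(E_g[w̃])²`. -/
theorem autonormalized_importance_sampling_error
    {E : Type*} [MeasurableSpace E] (μ : Measure E) [SigmaFinite μ]
    (f g ftilde : E → ℝ) (hf : Measurable f) (hg : Measurable g)
    (hf0 : ∀ x, 0 ≤ f x) (hg0 : ∀ x, 0 ≤ g x)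
    (hf1 : ∫ x, f x ∂μ = 1) (hg1 : ∫ x, g x ∂μ = 1)
    (Z : ℝ) (hZ : 0 < Z) (hft : ∀ x, ftilde x = Z * f x)
    (hsupp : ∀ x, g x = 0 → f x = 0)
    (wt : E → ℝ) (hwt : ∀ x, wt x = ftilde x / g x)
    (ν : Measure E) (hν : ν = μ.withDensity fun x => ENNReal.ofReal (g x))
    (hwt2 : MemLp wt 2 ν)
    (h : E → ℝ) (hh : Measurable h) (hhb : ∀ x, |h x| ≤ 1)
    {Ω : Type*} [MeasurableSpace Ω] (P : Measure Ω) [IsProbabilityMeasure P]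
    (N : ℕ) (hN : 0 < N)
    (X : Fin N → Ω → E) (hX : ∀ n, Measurable (X n))
    (hiid : iIndepFun X P)
    (hlaw : ∀ n, Measure.map (X n) P = ν)
    (AIS : Ω → ℝ)
    (hAIS : ∀ ω, AIS ω = (∑ n, wt (X n ω) * h (X n ω)) / ∑ n, wt (X n ω)) :
    |∫ ω, (AIS ω - ∫ x, h x * f x ∂μ) ∂P|
        ≤ (2 / N) * (∫ x, wt x ^ 2 ∂ν) / (∫ x, wt x ∂ν) ^ 2 ∧
      (∫ ω, (AIS ω - ∫ x, h x * f x ∂μ) ^ 2 ∂P)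
        ≤ (4 / N) * (∫ x, wt x ^ 2 ∂ν) / (∫ x, wt x ∂ν) ^ 2 :=
  autonormalized_importance_sampling_error_general μ f g ftilde hf hg hf0 hg0 hf1 hg1 Z hZ hft hsupp
    wt hwt ν hν hwt2 h hh hhb P N hN X hX hiid hlaw AIS hAIS
end

section
/- For the independence sampler with proposal density g and target density f satisfying f(x) ≤ M g(x) for all x (with M ≥ 1), the expected acceptance probability at stationarity is at least 1/M: if X ~ f and Z ~ g are independent, then E[min{1, (f(Z) g(X))/(f(X) g(Z))}] ≥ 1/M. -/
open MeasureTheory ProbabilityTheory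

/-! Since `f x ≤ M g x`, the acceptance probability at `(x, z)` is at least `f z / (M g z)`
whatever `x` is; under `Z ~ g` this lower bound has expectation `∫ f / M = 1 / M`. -/

/-- The Metropolis–Hastings acceptance probability of a move from `x` to the proposal `z`
drawn from the independent proposal density `g`, for the target density `f`. -/
noncomputable def acceptanceProb {E : Type*} (f g : E → ℝ) (x z : E) : ℝ :=
  min 1 (f z * g x / (f x * g z))

section AcceptanceProb

variable {E : Type*} {f g : E → ℝ}

lemma acceptanceProb_nonneg (hf : ∀ x, 0 ≤ f x) (hg : ∀ x, 0 ≤ g x) (x z : E) :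
    0 ≤ acceptanceProb f g x z :=
  le_min zero_le_one (by have := hf x; have := hf z; have := hg x; have := hg z; positivity)

lemma acceptanceProb_le_one (x z : E) : acceptanceProb f g x z ≤ 1 :=
  min_le_left _ _

lemma div_mul_le_acceptanceProb {M : ℝ} (hM : 0 < M) (hf : ∀ x, 0 < f x) (hg : ∀ x, 0 < g x)
    (hfg : ∀ x, f x ≤ M * g x) (x z : E) :
    f z / (M * g z) ≤ acceptanceProb f g x z := by
  have hgz := hg z
  refine le_min ((div_le_one (by positivity)).2 (hfg z)) ?_
  have hfx := hf x
  rw [div_le_div_iff₀ (by positivity) (by positivity)]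
  have := mul_le_mul_of_nonneg_left (hfg x) (mul_nonneg (hf z).le hgz.le)
  nlinarith

variable [MeasurableSpace E]

lemma Measurable.acceptanceProb (hf : Measurable f) (hg : Measurable g) :
    Measurable fun p : E × E => acceptanceProb f g p.1 p.2 :=
  measurable_const.min (((hf.comp measurable_snd).mul (hg.comp measurable_fst)).div
    ((hf.comp measurable_fst).mul (hg.comp measurable_snd)))

lemma integrable_acceptanceProb_comp {Ω : Type*} [MeasurableSpace Ω] {P : Measure Ω}
    [IsFiniteMeasure P] (hf : Measurable f) (hg : Measurable g)
    (hf0 : ∀ x, 0 ≤ f x) (hg0 : ∀ x, 0 ≤ g x) {X Z : Ω → E} (hX : Measurable X)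
    (hZ : Measurable Z) :
    Integrable (fun ω => acceptanceProb f g (X ω) (Z ω)) P := by
  refine Integrable.of_bound
    ((hf.acceptanceProb hg).comp (hX.prodMk hZ)).aestronglyMeasurable 1 (ae_of_all _ fun ω => ?_)
  rw [Real.norm_of_nonneg (acceptanceProb_nonneg hf0 hg0 _ _)]
  exact acceptanceProb_le_one _ _

end AcceptanceProb

lemma integral_comp_eq_integral_mul_of_map_eq_withDensity {E Ω : Type*} [MeasurableSpace E]
    [MeasurableSpace Ω] {μ : Measure E} {P : Measure Ω} {Z : Ω → E} {g h : E → ℝ}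
    (hZ : AEMeasurable Z P) (hg : Measurable g) (hg0 : ∀ᵐ x ∂μ, 0 ≤ g x)
    (hZlaw : P.map Z = μ.withDensity fun x => ENNReal.ofReal (g x))
    (hh : AEStronglyMeasurable h (P.map Z)) :
    ∫ ω, h (Z ω) ∂P = ∫ x, g x * h x ∂μ := by
  rw [← integral_map hZ hh, hZlaw, integral_withDensity_eq_integral_toReal_smul
    hg.ennreal_ofReal (ae_of_all _ fun _ => ENNReal.ofReal_lt_top)]
  refine integral_congr_ae (hg0.mono fun x hx => ?_)
  simp only [ENNReal.toReal_ofReal hx, smul_eq_mul]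

theorem independence_sampler_acceptance_rate_general
    {E : Type*} [MeasurableSpace E] (μ : Measure E)
    (f g : E → ℝ) (hf : Measurable f) (hg : Measurable g)
    (hf0 : ∀ x, 0 < f x) (hg0 : ∀ x, 0 < g x)
    (hf1 : ∫ x, f x ∂μ = 1)
    (M : ℝ) (hM : 1 ≤ M) (hMg : ∀ x, f x ≤ M * g x)
    {Ω : Type*} [MeasurableSpace Ω] (P : Measure Ω) [IsProbabilityMeasure P]
    (X Z : Ω → E) (hX : Measurable X) (hZ : Measurable Z)
    (hZlaw : Measure.map Z P = μ.withDensity fun x => ENNReal.ofReal (g x)) :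
    1 / M ≤ ∫ ω, min 1 (f (Z ω) * g (X ω) / (f (X ω) * g (Z ω))) ∂P := by
  have hM0 : 0 < M := one_pos.trans_le hM
  have hdensity : ∀ z, g z * (f z / (M * g z)) = f z / M := fun z => by
    field_simp [(hg0 z).ne']
  calc 1 / M = ∫ z, g z * (f z / (M * g z)) ∂μ := by
        simp_rw [hdensity, integral_div, hf1]
    _ = ∫ ω, f (Z ω) / (M * g (Z ω)) ∂P :=
        (integral_comp_eq_integral_mul_of_map_eq_withDensity hZ.aemeasurable hg
          (ae_of_all _ fun x => (hg0 x).le) hZlaw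
          (hf.div (measurable_const.mul hg)).aestronglyMeasurable).symm
    _ ≤ ∫ ω, acceptanceProb f g (X ω) (Z ω) ∂P :=
        integral_mono_of_nonneg
          (ae_of_all _ fun ω => by have := hf0 (Z ω); have := hg0 (Z ω); positivity)
          (integrable_acceptanceProb_comp hf hg (fun x => (hf0 x).le) (fun x => (hg0 x).le) hX hZ)
          (ae_of_all _ fun ω => div_mul_le_acceptanceProb hM0 hf0 hg0 hMg _ _)

/-- **Acceptance rate of the independence sampler.** If `f ≤ M g` everywhere, `X ~ f`,
`Z ~ g` independent, and ties `f(Z)g(X) = f(X)g(Z)` have probability zero, then the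
expected acceptance probability at stationarity is at least `1/M`. -/
theorem independence_sampler_acceptance_rate
    {E : Type*} [MeasurableSpace E] (μ : Measure E) [SigmaFinite μ]
    (f g : E → ℝ) (hf : Measurable f) (hg : Measurable g)
    (hf0 : ∀ x, 0 < f x) (hg0 : ∀ x, 0 < g x)
    (hf1 : ∫ x, f x ∂μ = 1) (hg1 : ∫ x, g x ∂μ = 1)
    (M : ℝ) (hM : 1 ≤ M) (hMg : ∀ x, f x ≤ M * g x)
    {Ω : Type*} [MeasurableSpace Ω] (P : Measure Ω) [IsProbabilityMeasure P]
    (X Z : Ω → E) (hX : Measurable X) (hZ : Measurable Z)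
    (hXlaw : Measure.map X P = μ.withDensity fun x => ENNReal.ofReal (f x))
    (hZlaw : Measure.map Z P = μ.withDensity fun x => ENNReal.ofReal (g x))
    (hindep : IndepFun X Z P)
    (hties : P {ω | f (Z ω) * g (X ω) = f (X ω) * g (Z ω)} = 0) :
    1 / M ≤ ∫ ω, min 1 (f (Z ω) * g (X ω) / (f (X ω) * g (Z ω))) ∂P :=
  independence_sampler_acceptance_rate_general μ f g hf hg hf0 hg0 hf1 M hM hMg P X Z hX hZ hZlaw
end

section
/- Let p be a Markov kernel on a state space E satisfying the minorization condition p(x, A) ≥ δ ν(A) for all x ∈ E and measurable A, for some δ ∈ (0,1) and probability measure ν, and suppose f is invariant for p. Then for every x and every n ≥ 1, the total variation distance between pⁿ(x,·) and f is at most (1 − δ)ⁿ. -/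
/-!
Write `η = δ • ν`, so that `p x = η + (p x - η)` for every `x`. The common part `η` cancels in
`∫ g ∂(p x) - ∫ g ∂(p x')`, and the two remainders have the same mass `1 - δ`, so one step of `p`
shrinks the oscillation of a bounded function by the factor `1 - δ` (Doeblin's coupling). Hence
`y ↦ pⁿ(y, A)` oscillates by at most `(1 - δ)ⁿ`, and since `f` is invariant,
`f(A) = ∫ pⁿ(y, A) ∂f(y)` is an average of these values and lies within `(1 - δ)ⁿ` of `pⁿ(x, A)`.
-/

open MeasureTheory ProbabilityTheory Set

noncomputable def kernelIterate {α : Type*} [MeasurableSpace α]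
    (p : Kernel α α) : ℕ → Kernel α α
  | 0 => Kernel.id
  | n + 1 => (kernelIterate p n) ∘ₖ p

section Oscillation

variable {α : Type*} [MeasurableSpace α] {g : α → ℝ} {m r : ℝ}

lemma integral_sub_integral_le_of_measure_univ_eq {ρ ρ' : Measure α} [IsFiniteMeasure ρ]
    [IsFiniteMeasure ρ'] (hmass : ρ univ = ρ' univ) (hg : Measurable g)
    (hgm : ∀ y, g y ∈ Icc m (m + r)) :
    ∫ y, g y ∂ρ - ∫ y, g y ∂ρ' ≤ ρ.real univ * r := by
  have hint (μ : Measure α) [IsFiniteMeasure μ] : Integrable g μ :=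
    .of_mem_Icc m (m + r) hg.aemeasurable (ae_of_all _ hgm)
  have hupper : ∫ y, g y ∂ρ ≤ ρ.real univ * (m + r) := by
    simpa using integral_mono (hint ρ) (integrable_const _) fun y => (hgm y).2
  have hlower : ρ'.real univ * m ≤ ∫ y, g y ∂ρ' := by
    simpa using integral_mono (integrable_const _) (hint ρ') fun y => (hgm y).1
  rw [measureReal_def, hmass, ← measureReal_def] at hupper ⊢
  linarith

lemma integral_sub_integral_le_of_common_le {μ μ' η : Measure α} [IsFiniteMeasure μ]
    [IsFiniteMeasure μ'] (hmass : μ univ = μ' univ) (hη : η ≤ μ) (hη' : η ≤ μ')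
    (hg : Measurable g) (hgm : ∀ y, g y ∈ Icc m (m + r)) :
    ∫ y, g y ∂μ - ∫ y, g y ∂μ' ≤ (μ.real univ - η.real univ) * r := by
  have : IsFiniteMeasure η := isFiniteMeasure_of_le μ hη
  have hint (ρ : Measure α) [IsFiniteMeasure ρ] : Integrable g ρ :=
    .of_mem_Icc m (m + r) hg.aemeasurable (ae_of_all _ hgm)
  have hsplit {ρ : Measure α} [IsFiniteMeasure ρ] (h : η ≤ ρ) :
      ∫ y, g y ∂ρ = ∫ y, g y ∂(ρ - η) + ∫ y, g y ∂η := by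
    conv_lhs => rw [← Measure.sub_add_cancel_of_le h]
    exact integral_add_measure (hint _) (hint _)
  have hresidual {ρ : Measure α} [IsFiniteMeasure ρ] (h : η ≤ ρ) :
      (ρ - η) univ = ρ univ - η univ := Measure.sub_apply MeasurableSet.univ h
  have key := integral_sub_integral_le_of_measure_univ_eq
    (by rw [hresidual hη, hresidual hη', hmass]) hg hgm (ρ := μ - η) (ρ' := μ' - η)
  rw [measureReal_def, hresidual hη, ENNReal.toReal_sub_of_le (hη _) (measure_ne_top _ _)] at key
  rw [hsplit hη, hsplit hη']
  simpa [measureReal_def] using key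

lemma abs_sub_integral_le_of_forall_abs_sub_le {μ : Measure α} [IsProbabilityMeasure μ]
    (hg : Integrable g μ) {x : α} (h : ∀ y, |g x - g y| ≤ r) : |g x - ∫ y, g y ∂μ| ≤ r := by
  have hmean : g x - ∫ y, g y ∂μ = ∫ y, (g x - g y) ∂μ := by
    rw [integral_sub (integrable_const _) hg, integral_const, probReal_univ, one_smul]
  simpa [hmean] using
    norm_integral_le_of_norm_le_const (μ := μ) (f := fun y => g x - g y) (ae_of_all _ h)

end Oscillation

lemma exists_forall_mem_Icc_of_sub_le {ι : Type*} [Nonempty ι] {g : ι → ℝ} {r : ℝ}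
    (hbdd : BddBelow (range g)) (hosc : ∀ y y', g y - g y' ≤ r) :
    ∃ m, ∀ y, g y ∈ Icc m (m + r) :=
  ⟨⨅ y, g y, fun y => ⟨ciInf_le hbdd y,
    sub_le_iff_le_add.1 (le_ciInf fun y' => sub_le_comm.1 (hosc y y'))⟩⟩

lemma toReal_bind_apply {α β : Type*} [MeasurableSpace α] [MeasurableSpace β] (κ : Kernel α β)
    [IsFiniteKernel κ] (μ : Measure α) {A : Set β} (hA : MeasurableSet A) :
    ((μ.bind κ) A).toReal = ∫ y, (κ y A).toReal ∂μ := by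
  rw [Measure.bind_apply hA κ.measurable.aemeasurable,
    integral_toReal (κ.measurable_coe hA).aemeasurable (ae_of_all _ fun _ => measure_lt_top _ _)]

section Iterate

variable {α : Type*} [MeasurableSpace α] {p : Kernel α α}

instance [IsMarkovKernel p] (n : ℕ) : IsMarkovKernel (kernelIterate p n) := by
  induction n with
  | zero => rw [kernelIterate]; infer_instance
  | succ n ih => rw [kernelIterate]; infer_instance

lemma kernelIterate_succ_apply (n : ℕ) (x : α) :
    kernelIterate p (n + 1) x = (p x).bind (kernelIterate p n) :=
  Kernel.comp_apply _ _ _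

lemma bind_kernelIterate_of_bind_eq {f : Measure α} (hinv : f.bind p = f) (n : ℕ) :
    f.bind (kernelIterate p n) = f := by
  induction n with
  | zero => simp [kernelIterate]
  | succ n ih =>
    rw [show ⇑(kernelIterate p (n + 1)) = fun x => (p x).bind (kernelIterate p n) from
        funext (kernelIterate_succ_apply n), ← Measure.bind_bind p.measurable.aemeasurable
        (kernelIterate p n).measurable.aemeasurable, hinv, ih]

lemma integrable_toReal_kernelIterate_apply [IsMarkovKernel p] (μ : Measure α) [IsFiniteMeasure μ]
    (n : ℕ) {A : Set α} (hA : MeasurableSet A) :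
    Integrable (fun y => (kernelIterate p n y A).toReal) μ :=
  .of_mem_Icc 0 1 (Kernel.measurable_coe _ hA).ennreal_toReal.aemeasurable
    (ae_of_all _ fun _ => ⟨measureReal_nonneg, measureReal_le_one⟩)

lemma kernelIterate_apply_sub_le_of_forall_le [IsMarkovKernel p] {η : Measure α}
    (hη : ∀ x, η ≤ p x) (n : ℕ) (x x' : α) {A : Set α} (hA : MeasurableSet A) :
    (kernelIterate p n x A).toReal - (kernelIterate p n x' A).toReal ≤ (1 - η.real univ) ^ n := by
  induction n generalizing x x' with
  | zero =>
    have h1 : (kernelIterate p 0 x).real A ≤ 1 := measureReal_le_one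
    have h0 : 0 ≤ (kernelIterate p 0 x').real A := measureReal_nonneg
    rw [measureReal_def] at h1 h0
    rw [pow_zero]
    linarith
  | succ n ih =>
    have : Nonempty α := ⟨x⟩
    obtain ⟨m, hgm⟩ :=
      exists_forall_mem_Icc_of_sub_le (g := fun y => (kernelIterate p n y A).toReal)
      ⟨0, by rintro _ ⟨y, rfl⟩; exact measureReal_nonneg⟩ fun y y' => ih y y'
    rw [kernelIterate_succ_apply, kernelIterate_succ_apply, toReal_bind_apply _ _ hA,
      toReal_bind_apply _ _ hA]
    calc _ ≤ ((p x).real univ - η.real univ) * (1 - η.real univ) ^ n :=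
          integral_sub_integral_le_of_common_le (by simp) (hη x) (hη x')
            (Kernel.measurable_coe _ hA).ennreal_toReal hgm
      _ = (1 - η.real univ) ^ (n + 1) := by rw [probReal_univ, pow_succ']

end Iterate

theorem minorization_uniform_ergodicity_general
    {α : Type*} [MeasurableSpace α]
    (p : Kernel α α) [IsMarkovKernel p]
    (δ : ℝ) (hδ0 : 0 < δ)
    (ν : Measure α) [IsProbabilityMeasure ν]
    (hminor : ∀ x, ∀ A : Set α, MeasurableSet A → ENNReal.ofReal δ * ν A ≤ p x A)
    (f : Measure α) [IsProbabilityMeasure f]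
    (hinv : f.bind (fun x => p x) = f) :
    ∀ (x : α) (n : ℕ) (A : Set α), MeasurableSet A →
      |((kernelIterate p n) x A).toReal - (f A).toReal| ≤ (1 - δ) ^ n := by
  intro x n A hA
  set η : Measure α := ENNReal.ofReal δ • ν
  have hη : ∀ y, η ≤ p y := fun y =>
    Measure.le_iff.2 fun s hs => by simpa [η] using hminor y s hs
  have hη_real : η.real univ = δ := by simp [η, hδ0.le]
  have hosc := kernelIterate_apply_sub_le_of_forall_le hη n (A := A)
  rw [← bind_kernelIterate_of_bind_eq hinv n, toReal_bind_apply _ _ hA, ← hη_real]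
  exact abs_sub_integral_le_of_forall_abs_sub_le (integrable_toReal_kernelIterate_apply f n hA)
    fun y => abs_sub_le_iff.2 ⟨hosc x y hA, hosc y x hA⟩

/-- **Minorization implies uniform ergodicity.** If a Markov kernel `p` satisfies
`p(x, A) ≥ δ ν(A)` for all `x` and measurable `A` (with `δ ∈ (0,1)` and `ν` a
probability measure), and `f` is an invariant probability measure of `p`, then for all
`x`, `n` and measurable `A`, `|pⁿ(x, A) − f(A)| ≤ (1 − δ)ⁿ`; i.e. the total variation
distance between `pⁿ(x,·)` and `f` is at most `(1 − δ)ⁿ`. -/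
theorem minorization_uniform_ergodicity
    {α : Type*} [MeasurableSpace α]
    (p : Kernel α α) [IsMarkovKernel p]
    (δ : ℝ) (hδ0 : 0 < δ) (hδ1 : δ < 1)
    (ν : Measure α) [IsProbabilityMeasure ν]
    (hminor : ∀ x, ∀ A : Set α, MeasurableSet A → ENNReal.ofReal δ * ν A ≤ p x A)
    (f : Measure α) [IsProbabilityMeasure f]
    (hinv : f.bind (fun x => p x) = f) :
    ∀ (x : α) (n : ℕ) (A : Set α), MeasurableSet A →
      |((kernelIterate p n) x A).toReal - (f A).toReal| ≤ (1 - δ) ^ n :=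
  minorization_uniform_ergodicity_general p δ hδ0 ν hminor f hinv
end
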